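/- arXiv:2305.10454 — 6 statements merged into one kernel-verified Lean document; each statement's English description precedes it below -/
import Mathlib

section
/- Let α < β, γ ∈ [α,β], and let a, b : [α,β] → ℝ be continuous with a(γ) ≠ 0 and b(γ) ≠ 0. Define (Ax)(t) = a(t)·x(γ) and (Bx)(t) = b(t)·x(t) on C[α,β], and let F(z) = Σ_{j=1}^{n} δⱼ z^j (no constant term). If b is not constant on any open subinterval of [α,β] (i.e., for every nonempty open interval J ⊆ (α,β), b is nonconstant on J), then A∘B ≠ B∘F(A) as operators on C[α,β]. -/
/-!
Test the identity on the constant function `1`. Since `A y` only depends on `y γ`, the iterates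
are `Aʲ 1 = a · a(γ)ʲ⁻¹`, so `F(A) 1 = K · a` for a constant `K`, and the identity reads
`a(t) b(γ) = K a(t) b(t)` on `[α, β]`. At `t = γ` this forces `K = 1`, hence `b = b(γ)` wherever
`a ≠ 0`. By continuity `a` does not vanish on a neighbourhood of `γ` in `[α, β]`, which contains a
nondegenerate open interval on which `b` would be constant.
-/

open Set Filter Topology

theorem exists_Ioo_subset_of_mem_nhdsWithin_Icc {X : Type*} [TopologicalSpace X] [LinearOrder X]
    [OrderTopology X] {α β γ : X} (hαβ : α < β) (hγ : γ ∈ Icc α β) {s : Set X}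
    (hs : s ∈ 𝓝[Icc α β] γ) : ∃ c d, α ≤ c ∧ c < d ∧ d ≤ β ∧ Ioo c d ⊆ s := by
  rcases lt_or_ge γ β with hγβ | hβγ
  · have hs' : s ∈ 𝓝[>] γ := by
      rw [← nhdsWithin_Ioo_eq_nhdsGT hγβ]
      exact nhdsWithin_mono γ Ioo_subset_Icc_self (nhdsWithin_mono γ (Icc_subset_Icc_left hγ.1) hs)
    obtain ⟨d, ⟨hγd, hdβ⟩, hsub⟩ := (mem_nhdsGT_iff_exists_mem_Ioc_Ioo_subset hγβ).1 hs'
    exact ⟨γ, d, hγ.1, hγd, hdβ, hsub⟩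
  · have hαγ : α < γ := hαβ.trans_le hβγ
    have hs' : s ∈ 𝓝[<] γ := by
      rw [← nhdsWithin_Ioo_eq_nhdsLT hαγ]
      exact nhdsWithin_mono γ Ioo_subset_Icc_self (nhdsWithin_mono γ (Icc_subset_Icc_right hγ.2) hs)
    obtain ⟨c, ⟨hαc, hcγ⟩, hsub⟩ := (mem_nhdsLT_iff_exists_mem_Ico_Ioo_subset hαγ).1 hs'
    exact ⟨c, γ, hαc, hcγ, hγ.2, hsub⟩

theorem iterate_mul_eval_succ_apply {R : Type*} [CommMonoid R] (a : R → R) (γ : R)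
    (y : R → R) (j : ℕ) (s : R) :
    (fun y s => a s * y γ)^[j + 1] y s = a s * a γ ^ j * y γ := by
  induction j generalizing s with
  | zero => simp
  | succ j ih =>
    rw [Function.iterate_succ_apply', ih, pow_succ]
    ac_rfl

theorem eq_of_mul_eq_mul_mul {X R : Type*} [Field R] {S : Set X} {a b : X → R} {γ : X} {K : R}
    (hγ : γ ∈ S) (haγ : a γ ≠ 0) (hbγ : b γ ≠ 0) (h : ∀ t ∈ S, a t * b γ = b t * (a t * K))
    {t : X} (ht : t ∈ S) (hat : a t ≠ 0) : b t = b γ := by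
  have hK : K = 1 := by
    have := h γ hγ
    field_simp at this
    exact this.symm
  have := h t ht
  rw [hK, mul_one, mul_comm] at this
  exact (mul_right_cancel₀ hat this).symm

theorem stmt11_general (α β γ : ℝ) (hαβ : α < β) (hγ : γ ∈ Set.Icc α β)
    (a b : ℝ → ℝ) (ha : ContinuousOn a (Set.Icc α β))
    (haγ : a γ ≠ 0) (hbγ : b γ ≠ 0) (n : ℕ) (δ : ℕ → ℝ)
    (hbnc : ∀ c d : ℝ, α ≤ c → c < d → d ≤ β →
      ∃ s₁ ∈ Set.Ioo c d, ∃ s₂ ∈ Set.Ioo c d, b s₁ ≠ b s₂) :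
    let A : (ℝ → ℝ) → (ℝ → ℝ) := fun y s => a s * y γ
    let B : (ℝ → ℝ) → (ℝ → ℝ) := fun y s => b s * y s
    let FA : (ℝ → ℝ) → (ℝ → ℝ) :=
      fun y s => ∑ j ∈ Finset.Icc 1 n, δ j * (A^[j] y) s
    ∃ x : ℝ → ℝ, ContinuousOn x (Set.Icc α β) ∧
      ∃ t ∈ Set.Icc α β, A (B x) t ≠ B (FA x) t := by
  intro A B FA
  refine ⟨1, continuousOn_const, ?_⟩
  by_contra! h
  set K := ∑ j ∈ Finset.Icc 1 n, δ j * a γ ^ (j - 1)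
  have hFA : ∀ t, FA 1 t = a t * K := by
    intro t
    rw [Finset.mul_sum]
    refine Finset.sum_congr rfl fun j hj => ?_
    obtain ⟨i, rfl⟩ := Nat.exists_eq_add_of_le' (Finset.mem_Icc.1 hj).1
    simp only [A, iterate_mul_eval_succ_apply, Pi.one_apply, Nat.add_sub_cancel]
    ring
  have hid : ∀ t ∈ Icc α β, a t * b γ = b t * (a t * K) := fun t ht => by
    simpa [A, B, hFA] using h t ht
  obtain ⟨c, d, hαc, hcd, hdβ, hsub⟩ :=
    exists_Ioo_subset_of_mem_nhdsWithin_Icc hαβ hγ (inter_mem ((ha γ hγ).eventually_ne haγ)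
      self_mem_nhdsWithin)
  have hconst : ∀ s ∈ Ioo c d, b s = b γ := fun s hs =>
    eq_of_mul_eq_mul_mul hγ haγ hbγ hid (hsub hs).2 (hsub hs).1
  obtain ⟨s₁, hs₁, s₂, hs₂, hne⟩ := hbnc c d hαc hcd hdβ
  exact hne ((hconst s₁ hs₁).trans (hconst s₂ hs₂).symm)

theorem stmt11 (α β γ : ℝ) (hαβ : α < β) (hγ : γ ∈ Set.Icc α β)
    (a b : ℝ → ℝ) (ha : ContinuousOn a (Set.Icc α β)) (hb : ContinuousOn b (Set.Icc α β))
    (haγ : a γ ≠ 0) (hbγ : b γ ≠ 0) (n : ℕ) (δ : ℕ → ℝ)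
    (hbnc : ∀ c d : ℝ, α ≤ c → c < d → d ≤ β →
      ∃ s₁ ∈ Set.Ioo c d, ∃ s₂ ∈ Set.Ioo c d, b s₁ ≠ b s₂) :
    let A : (ℝ → ℝ) → (ℝ → ℝ) := fun y s => a s * y γ
    let B : (ℝ → ℝ) → (ℝ → ℝ) := fun y s => b s * y s
    let FA : (ℝ → ℝ) → (ℝ → ℝ) :=
      fun y s => ∑ j ∈ Finset.Icc 1 n, δ j * (A^[j] y) s
    ∃ x : ℝ → ℝ, ContinuousOn x (Set.Icc α β) ∧
      ∃ t ∈ Set.Icc α β, A (B x) t ≠ B (FA x) t :=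
  stmt11_general α β γ hαβ hγ a b ha haγ hbγ n δ hbnc
end

section
/- Let α < β, γ ∈ [α,β], and let a, b : [α,β] → ℝ be continuous with a(γ) ≠ 0 and b(γ) ≠ 0. Define (Ax)(t) = a(t)·x(γ) and (Bx)(t) = b(t)·x(t) on C[α,β], and F(z) = Σ_{j=1}^{n} δⱼ z^j. Suppose b is constant on [α,β] with value b(γ) ≠ 0. Then A∘B = B∘F(A) on C[α,β] if and only if k₁ := Σ_{j=1}^{n} δⱼ·a(γ)^{j−1} = 1. -/
/-!
The operator `A x = x(γ) • a` has rank one, so every power of it is a multiple of itself: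
`Aʲ x = a(γ)^(j-1) • A x`, and hence `F(A) = k₁ • A`. With `B` multiplication by the nonzero
constant `b(γ)`, both `A ∘ B` and `B ∘ F(A)` are multiples of `b(γ) • A`, with factors `1` and `k₁`;
testing on `x ≡ 1` at `t = γ`, where `a(γ) ≠ 0`, separates the factors.
-/

lemma iterate_succ_evalMul_apply (a : ℝ → ℝ) (γ : ℝ) (j : ℕ) (y : ℝ → ℝ) (s : ℝ) :
    ((fun y s => a s * y γ)^[j + 1] y) s = a s * a γ ^ j * y γ := by
  induction j generalizing s with
  | zero => simp
  | succ j ih =>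
    rw [Function.iterate_succ_apply', ih γ]
    ring

lemma sum_iterate_evalMul_apply (a : ℝ → ℝ) (γ : ℝ) (n : ℕ) (δ : ℕ → ℝ) (y : ℝ → ℝ) (s : ℝ) :
    ∑ j ∈ Finset.Icc 1 n, δ j * ((fun y s => a s * y γ)^[j] y) s
      = (∑ j ∈ Finset.Icc 1 n, δ j * a γ ^ (j - 1)) * (a s * y γ) := by
  rw [Finset.sum_mul]
  refine Finset.sum_congr rfl fun j hj => ?_
  obtain ⟨i, rfl⟩ := Nat.exists_eq_add_of_le' (Finset.mem_Icc.mp hj).1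
  rw [iterate_succ_evalMul_apply, Nat.add_sub_cancel]
  ring

theorem stmt12_general (α β γ : ℝ) (hγ : γ ∈ Set.Icc α β)
    (a b : ℝ → ℝ)
    (haγ : a γ ≠ 0) (hbγ : b γ ≠ 0) (n : ℕ) (δ : ℕ → ℝ)
    (hbconst : ∀ t ∈ Set.Icc α β, b t = b γ) :
    let A : (ℝ → ℝ) → (ℝ → ℝ) := fun y s => a s * y γ
    let B : (ℝ → ℝ) → (ℝ → ℝ) := fun y s => b s * y s
    let FA : (ℝ → ℝ) → (ℝ → ℝ) :=
      fun y s => ∑ j ∈ Finset.Icc 1 n, δ j * (A^[j] y) s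
    ((∀ x : ℝ → ℝ, ContinuousOn x (Set.Icc α β) →
        ∀ t ∈ Set.Icc α β, A (B x) t = B (FA x) t) ↔
      (∑ j ∈ Finset.Icc 1 n, δ j * a γ ^ (j - 1)) = 1) := by
  intro A B FA
  simp only [A, B, FA, sum_iterate_evalMul_apply]
  set k := ∑ j ∈ Finset.Icc 1 n, δ j * a γ ^ (j - 1)
  constructor
  · intro h
    have h1 : a γ * b γ * 1 = a γ * b γ * k := by
      linear_combination h (fun _ => 1) continuousOn_const γ hγ
    exact (mul_left_cancel₀ (mul_ne_zero haγ hbγ) h1).symm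
  · intro hk x _ t ht
    rw [hk, hbconst t ht]
    ring

theorem stmt12 (α β γ : ℝ) (hαβ : α < β) (hγ : γ ∈ Set.Icc α β)
    (a b : ℝ → ℝ) (ha : ContinuousOn a (Set.Icc α β)) (hb : ContinuousOn b (Set.Icc α β))
    (haγ : a γ ≠ 0) (hbγ : b γ ≠ 0) (n : ℕ) (δ : ℕ → ℝ)
    (hbconst : ∀ t ∈ Set.Icc α β, b t = b γ) :
    let A : (ℝ → ℝ) → (ℝ → ℝ) := fun y s => a s * y γ
    let B : (ℝ → ℝ) → (ℝ → ℝ) := fun y s => b s * y s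
    let FA : (ℝ → ℝ) → (ℝ → ℝ) :=
      fun y s => ∑ j ∈ Finset.Icc 1 n, δ j * (A^[j] y) s
    ((∀ x : ℝ → ℝ, ContinuousOn x (Set.Icc α β) →
        ∀ t ∈ Set.Icc α β, A (B x) t = B (FA x) t) ↔
      (∑ j ∈ Finset.Icc 1 n, δ j * a γ ^ (j - 1)) = 1) :=
  stmt12_general α β γ hγ a b haγ hbγ n δ hbconst
end

section
/- Let α < β, γ ∈ [α,β], and a, b : [α,β] → ℝ continuous with a(γ) ≠ 0 and b(γ) = 0. Define (Ax)(t) = a(t)·x(γ) and (Bx)(t) = b(t)·x(t) on C[α,β], and F(z) = Σ_{j=1}^{n} δⱼ z^j. Set k₁ = Σ_{j=1}^{n} δⱼ·a(γ)^{j−1}. Then A∘B = B∘F(A) on C[α,β] if and only if k₁ = 0 or supp a ∩ supp b = ∅. -/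
/-! Since `b γ = 0`, `A ∘ B = 0`. The operator `A` has rank one with `A^[j+1] x = a γ ^ j • A x`,
so `B (F(A) x) = k₁ · x γ · a · b`, and testing with `x = 1` shows this vanishes for all `x`
exactly when `k₁ = 0` or `a · b = 0` on `[α, β]`. -/

open Finset

section RankOne

variable {X R : Type*} [CommSemiring R]

theorem iterate_rankOne_apply (a : X → R) (γ : X) (j : ℕ) (x : X → R) (t : X) :
    (fun (y : X → R) (s : X) => a s * y γ)^[j + 1] x t = a t * a γ ^ j * x γ := by
  induction j generalizing t with
  | zero => simp
  | succ j ih =>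
    rw [Function.iterate_succ_apply', ih γ]
    ring

theorem sum_mul_iterate_rankOne_apply (a : X → R) (γ : X) (n : ℕ) (δ : ℕ → R)
    (x : X → R) (t : X) :
    ∑ j ∈ Icc 1 n, δ j * (fun (y : X → R) (s : X) => a s * y γ)^[j] x t =
      a t * x γ * ∑ j ∈ Icc 1 n, δ j * a γ ^ (j - 1) := by
  rw [mul_sum]
  refine sum_congr rfl fun j hj => ?_
  obtain ⟨i, rfl⟩ := Nat.exists_eq_add_of_le' (mem_Icc.mp hj).1
  rw [iterate_rankOne_apply, Nat.add_sub_cancel]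
  ring

end RankOne

theorem setOf_ne_zero_inter_eq_empty_iff {X M₀ : Type*} [MulZeroClass M₀] [NoZeroDivisors M₀]
    (s : Set X) (a b : X → M₀) :
    {t | t ∈ s ∧ a t ≠ 0} ∩ {t | t ∈ s ∧ b t ≠ 0} = ∅ ↔ ∀ t ∈ s, a t * b t = 0 := by
  simp only [Set.eq_empty_iff_forall_notMem, Set.mem_inter_iff, Set.mem_ofPred_eq,
    mul_eq_zero]
  grind

theorem stmt14_general (α β γ : ℝ)
    (a b : ℝ → ℝ)
    (hbγ : b γ = 0) (n : ℕ) (δ : ℕ → ℝ) :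
    let A : (ℝ → ℝ) → (ℝ → ℝ) := fun y s => a s * y γ
    let B : (ℝ → ℝ) → (ℝ → ℝ) := fun y s => b s * y s
    let FA : (ℝ → ℝ) → (ℝ → ℝ) :=
      fun y s => ∑ j ∈ Finset.Icc 1 n, δ j * (A^[j] y) s
    ((∀ x : ℝ → ℝ, ContinuousOn x (Set.Icc α β) →
        ∀ t ∈ Set.Icc α β, A (B x) t = B (FA x) t) ↔
      ((∑ j ∈ Finset.Icc 1 n, δ j * a γ ^ (j - 1)) = 0 ∨
        {t | t ∈ Set.Icc α β ∧ a t ≠ 0} ∩ {t | t ∈ Set.Icc α β ∧ b t ≠ 0} = ∅)) := by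
  intro A B FA
  set k := ∑ j ∈ Icc 1 n, δ j * a γ ^ (j - 1)
  have hFA (x : ℝ → ℝ) (t : ℝ) : FA x t = a t * x γ * k :=
    sum_mul_iterate_rankOne_apply a γ n δ x t
  have hAB (x : ℝ → ℝ) (t : ℝ) : A (B x) t = 0 := by
    simp only [A, B, hbγ, zero_mul, mul_zero]
  simp only [hAB, B, hFA, setOf_ne_zero_inter_eq_empty_iff]
  constructor
  · refine fun h => or_iff_not_imp_left.mpr fun hk t ht => ?_
    have h1 := h (fun _ => 1) continuousOn_const t ht
    simp only [mul_one] at h1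
    rcases mul_eq_zero.mp h1.symm with hbt | hakt
    · simp [hbt]
    · simp [(mul_eq_zero.mp hakt).resolve_right hk]
  · rintro (hk | hab) x - t ht
    · simp [hk]
    · linear_combination (-(x γ * k)) * hab t ht

theorem stmt14 (α β γ : ℝ) (hαβ : α < β) (hγ : γ ∈ Set.Icc α β)
    (a b : ℝ → ℝ) (ha : ContinuousOn a (Set.Icc α β)) (hb : ContinuousOn b (Set.Icc α β))
    (haγ : a γ ≠ 0) (hbγ : b γ = 0) (n : ℕ) (δ : ℕ → ℝ) :
    let A : (ℝ → ℝ) → (ℝ → ℝ) := fun y s => a s * y γ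
    let B : (ℝ → ℝ) → (ℝ → ℝ) := fun y s => b s * y s
    let FA : (ℝ → ℝ) → (ℝ → ℝ) :=
      fun y s => ∑ j ∈ Finset.Icc 1 n, δ j * (A^[j] y) s
    ((∀ x : ℝ → ℝ, ContinuousOn x (Set.Icc α β) →
        ∀ t ∈ Set.Icc α β, A (B x) t = B (FA x) t) ↔
      ((∑ j ∈ Finset.Icc 1 n, δ j * a γ ^ (j - 1)) = 0 ∨
        {t | t ∈ Set.Icc α β ∧ a t ≠ 0} ∩ {t | t ∈ Set.Icc α β ∧ b t ≠ 0} = ∅)) :=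
  stmt14_general α β γ a b hbγ n δ
end

section
/- Let α < β, γ ∈ [α,β], and let a, b : [α,β] → ℝ be continuous, not identically zero, with a(γ) = b(γ) = 0. Define (Ax)(t) = a(t)·x(γ) and (Bx)(t) = b(t)·x(t) on C[α,β], and F(z) = Σ_{j=0}^{n} δⱼ z^j. Then A∘B = B∘F(A) on C[α,β] if and only if δ₀ = 0 and (δ₁ = 0 or supp a ∩ supp b = ∅). -/
/-!
Since `a γ = 0` and `b γ = 0`, both `A ∘ A` and `A ∘ B` vanish, so `F(A) = δ₀ I + δ₁ A`
and the identity `A B = B F(A)` reads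
`b(t) (δ₀ x(t) + δ₁ a(t) x(γ)) = 0`. Testing with `x(s) = s - γ` at a point where `b ≠ 0`
forces `δ₀ = 0`; testing with `x = 1` then leaves `δ₁ a b = 0`.
-/

open Finset

section Iterates

variable {X R : Type*} {a : X → R} {γ : X}

theorem iterate_mul_eval_add_two [MulZeroClass R] (haγ : a γ = 0) (y : X → R) (k : ℕ) :
    (fun (y : X → R) s => a s * y γ)^[k + 2] y = 0 := by
  funext s
  rw [Function.iterate_succ_apply', Function.iterate_succ_apply']
  simp [haγ]

theorem sum_Icc_mul_iterate_mul_eval [NonUnitalNonAssocSemiring R] (haγ : a γ = 0) {n : ℕ}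
    (hn : 1 ≤ n) (δ : ℕ → R) (y : X → R) (s : X) :
    ∑ j ∈ Icc 1 n, δ j * ((fun (y : X → R) s => a s * y γ)^[j] y) s = δ 1 * (a s * y γ) := by
  rw [sum_eq_single_of_mem 1 (mem_Icc.mpr ⟨le_rfl, hn⟩)]
  · rfl
  · intro j hj hj1
    obtain ⟨k, rfl⟩ : ∃ k, j = k + 2 := ⟨j - 2, by grind⟩
    simp [iterate_mul_eval_add_two haγ]

end Iterates

theorem forall_mul_mul_eq_zero_iff {X R : Type*} [MulZeroClass R] [NoZeroDivisors R]
    {S : Set X} {a b : X → R} (d : R) :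
    (∀ t ∈ S, b t * (d * a t) = 0) ↔
      d = 0 ∨ {t | t ∈ S ∧ a t ≠ 0} ∩ {t | t ∈ S ∧ b t ≠ 0} = ∅ := by
  by_cases hd : d = 0
  · simp [hd]
  · simp only [hd, false_or, Set.eq_empty_iff_forall_notMem, Set.mem_inter_iff,
      Set.mem_ofPred_eq, mul_eq_zero]
    grind

section TestFunctions

variable {𝕜 : Type*} [Field 𝕜] [TopologicalSpace 𝕜] [IsTopologicalRing 𝕜]
  {S : Set 𝕜} {a b : 𝕜 → 𝕜} {γ : 𝕜}

theorem forall_continuousOn_mul_eq_zero_iff (hbγ : b γ = 0) (hbne : ∃ t ∈ S, b t ≠ 0)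
    (c d : 𝕜) :
    (∀ x : 𝕜 → 𝕜, ContinuousOn x S → ∀ t ∈ S, b t * (c * x t + d * (a t * x γ)) = 0) ↔
      c = 0 ∧ ∀ t ∈ S, b t * (d * a t) = 0 := by
  constructor
  · intro h
    have hc : c = 0 := by
      obtain ⟨t₀, ht₀, hbt₀⟩ := hbne
      have ht₀γ : t₀ - γ ≠ 0 := sub_ne_zero.mpr (by rintro rfl; exact hbt₀ hbγ)
      have := h (· - γ) (continuous_sub_right γ).continuousOn t₀ ht₀
      simpa [hbt₀, ht₀γ] using this
    refine ⟨hc, fun t ht => ?_⟩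
    simpa [hc] using h 1 continuousOn_const t ht
  · rintro ⟨rfl, hd⟩ x _ t ht
    calc b t * (0 * x t + d * (a t * x γ)) = b t * (d * a t) * x γ := by ring
      _ = 0 := by rw [hd t ht, zero_mul]

end TestFunctions

theorem stmt15_general (α β γ : ℝ)
    (a b : ℝ → ℝ)
    (hbne : ∃ t ∈ Set.Icc α β, b t ≠ 0)
    (haγ : a γ = 0) (hbγ : b γ = 0) (n : ℕ) (hn : 1 ≤ n) (δ : ℕ → ℝ) :
    let A : (ℝ → ℝ) → (ℝ → ℝ) := fun y s => a s * y γ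
    let B : (ℝ → ℝ) → (ℝ → ℝ) := fun y s => b s * y s
    let FA : (ℝ → ℝ) → (ℝ → ℝ) :=
      fun y s => δ 0 * y s + ∑ j ∈ Finset.Icc 1 n, δ j * (A^[j] y) s
    ((∀ x : ℝ → ℝ, ContinuousOn x (Set.Icc α β) →
        ∀ t ∈ Set.Icc α β, A (B x) t = B (FA x) t) ↔
      (δ 0 = 0 ∧ (δ 1 = 0 ∨
        {t | t ∈ Set.Icc α β ∧ a t ≠ 0} ∩ {t | t ∈ Set.Icc α β ∧ b t ≠ 0} = ∅))) := by
  intro A B FA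
  have hAB (x : ℝ → ℝ) (t : ℝ) : A (B x) t = 0 := by simp [A, B, hbγ]
  have hBFA (x : ℝ → ℝ) (t : ℝ) : B (FA x) t = b t * (δ 0 * x t + δ 1 * (a t * x γ)) := by
    simp only [B, FA, A, sum_Icc_mul_iterate_mul_eval haγ hn]
  simp only [hAB, hBFA, eq_comm (a := (0 : ℝ))]
  rw [forall_continuousOn_mul_eq_zero_iff hbγ hbne, forall_mul_mul_eq_zero_iff]

theorem stmt15 (α β γ : ℝ) (hαβ : α < β) (hγ : γ ∈ Set.Icc α β)
    (a b : ℝ → ℝ) (ha : ContinuousOn a (Set.Icc α β)) (hb : ContinuousOn b (Set.Icc α β))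
    (hane : ∃ t ∈ Set.Icc α β, a t ≠ 0) (hbne : ∃ t ∈ Set.Icc α β, b t ≠ 0)
    (haγ : a γ = 0) (hbγ : b γ = 0) (n : ℕ) (hn : 1 ≤ n) (δ : ℕ → ℝ) :
    let A : (ℝ → ℝ) → (ℝ → ℝ) := fun y s => a s * y γ
    let B : (ℝ → ℝ) → (ℝ → ℝ) := fun y s => b s * y s
    let FA : (ℝ → ℝ) → (ℝ → ℝ) :=
      fun y s => δ 0 * y s + ∑ j ∈ Finset.Icc 1 n, δ j * (A^[j] y) s
    ((∀ x : ℝ → ℝ, ContinuousOn x (Set.Icc α β) →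
        ∀ t ∈ Set.Icc α β, A (B x) t = B (FA x) t) ↔
      (δ 0 = 0 ∧ (δ 1 = 0 ∨
        {t | t ∈ Set.Icc α β ∧ a t ≠ 0} ∩ {t | t ∈ Set.Icc α β ∧ b t ≠ 0} = ∅))) :=
  stmt15_general α β γ a b hbne haγ hbγ n hn δ
end

section
/- Let α < β, γ ∈ [α,β], and let a, b : [α,β] → ℝ be continuous. Define (Ax)(t) = a(t)·x(t) (multiplication) and (Bx)(t) = b(t)·x(γ) (evaluation at γ times b) on C[α,β], and let F(z) = Σ_{j=0}^{n} δⱼ z^j. Then A∘B = B∘F(A) on C[α,β] if and only if supp(a − F(a(γ))) ∩ supp b = ∅, i.e., for every t ∈ [α,β], b(t)·(a(t) − F(a(γ))) = 0. -/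
/-! On `C[α, β]` the operator `A` is multiplication by `a`, so `A^[j] x = a ^ j * x` and `F(A)x`
evaluated at `γ` is `F(a γ) * x γ`. Hence `(A ∘ B) x = a * b * x γ` and `(B ∘ F(A)) x = b * F(a γ) * x γ`;
these agree for all `x` iff `b * (a - F(a γ)) = 0`, the forward direction by testing `x = 1`. -/

theorem Finset.sum_range_succ_eq_add_sum_Icc_one {M : Type*} [AddCommMonoid M] (n : ℕ)
    (g : ℕ → M) : ∑ j ∈ range (n + 1), g j = g 0 + ∑ j ∈ Icc 1 n, g j := by
  rw [Nat.range_succ_eq_Icc_zero, ← insert_Icc_succ_left_eq_Icc n.zero_le, sum_insert (by simp),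
    Order.succ_eq_add_one, zero_add]

section MultiplicationOperator

variable {X R : Type*} [CommSemiring R]

theorem iterate_mulOperator_apply (a : X → R) (j : ℕ) (y : X → R) (s : X) :
    (fun y s => a s * y s : (X → R) → X → R)^[j] y s = a s ^ j * y s := by
  induction j generalizing y with
  | zero => simp
  | succ k ih =>
    rw [Function.iterate_succ_apply', ih]
    ring

theorem polynomial_mulOperator_apply (a : X → R) (n : ℕ) (δ : ℕ → R) (y : X → R) (s : X) :
    δ 0 * y s + ∑ j ∈ Finset.Icc 1 n,
        δ j * ((fun y s => a s * y s : (X → R) → X → R)^[j] y) s =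
      (∑ j ∈ Finset.range (n + 1), δ j * a s ^ j) * y s := by
  simp only [iterate_mulOperator_apply, Finset.sum_range_succ_eq_add_sum_Icc_one, add_mul,
    Finset.sum_mul, pow_zero, mul_one, mul_assoc]

end MultiplicationOperator

theorem stmt16_general (α β γ : ℝ)
    (a b : ℝ → ℝ)
    (n : ℕ) (δ : ℕ → ℝ) :
    let A : (ℝ → ℝ) → (ℝ → ℝ) := fun y s => a s * y s
    let B : (ℝ → ℝ) → (ℝ → ℝ) := fun y s => b s * y γ
    let FA : (ℝ → ℝ) → (ℝ → ℝ) :=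
      fun y s => δ 0 * y s + ∑ j ∈ Finset.Icc 1 n, δ j * (A^[j] y) s
    ((∀ x : ℝ → ℝ, ContinuousOn x (Set.Icc α β) →
        ∀ t ∈ Set.Icc α β, A (B x) t = B (FA x) t) ↔
      ∀ t ∈ Set.Icc α β,
        b t * (a t - ∑ j ∈ Finset.range (n + 1), δ j * a γ ^ j) = 0) := by
  intro A B FA
  have hFA (x : ℝ → ℝ) : FA x γ = (∑ j ∈ Finset.range (n + 1), δ j * a γ ^ j) * x γ :=
    polynomial_mulOperator_apply a n δ x γ
  have hcomm (x : ℝ → ℝ) (t : ℝ) :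
      A (B x) t - B (FA x) t = b t * (a t - ∑ j ∈ Finset.range (n + 1), δ j * a γ ^ j) * x γ := by
    show a t * (b t * x γ) - b t * FA x γ = _
    rw [hFA]
    ring
  constructor
  · intro h t ht
    simpa only [Pi.one_apply, mul_one] using
      (hcomm 1 t).symm.trans (sub_eq_zero.mpr (h 1 continuousOn_const t ht))
  · intro h x _ t ht
    rw [← sub_eq_zero, hcomm, h t ht, zero_mul]

theorem stmt16 (α β γ : ℝ) (hαβ : α < β) (hγ : γ ∈ Set.Icc α β)
    (a b : ℝ → ℝ) (ha : ContinuousOn a (Set.Icc α β)) (hb : ContinuousOn b (Set.Icc α β))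
    (n : ℕ) (δ : ℕ → ℝ) :
    let A : (ℝ → ℝ) → (ℝ → ℝ) := fun y s => a s * y s
    let B : (ℝ → ℝ) → (ℝ → ℝ) := fun y s => b s * y γ
    let FA : (ℝ → ℝ) → (ℝ → ℝ) :=
      fun y s => δ 0 * y s + ∑ j ∈ Finset.Icc 1 n, δ j * (A^[j] y) s
    ((∀ x : ℝ → ℝ, ContinuousOn x (Set.Icc α β) →
        ∀ t ∈ Set.Icc α β, A (B x) t = B (FA x) t) ↔
      ∀ t ∈ Set.Icc α β,
        b t * (a t - ∑ j ∈ Finset.range (n + 1), δ j * a γ ^ j) = 0) :=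
  stmt16_general α β γ a b n δ
end

section
/- Define operators on functions x : [0,2] → ℝ by (A₀x)(t) = a(t)·x(t) with a(t) = sin(πt) for t ∈ [0,1] and a(t) = 0 for t ∈ (1,2], and (Bx)(t) = b(t)·x(1/2) with b(t) = sin(πt) for t ∈ [1,2] and b(t) = 0 for t ∈ [0,1). Then B∘A₀ − A₀∘B = B, and moreover for every ν ∈ ℝ, the operator A_ν = A₀ + ν·I satisfies B∘A_ν − A_ν∘B = B. -/
/-!
`B` is the rank-one operator `x ↦ b · x(1/2)`, so `B (a x) = a(1/2) · B x = B x`, while `a · B x = 0`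
because `a` and `b` have disjoint supports (both vanish at `t = 1`, where the two pieces meet).
The shift `ν · I` commutes with `B`, so it does not change the commutator.
-/

theorem rankOne_mul_sub_mul_rankOne {α R : Type*} [CommRing R] {a b : α → R} (x : α → R)
    {p t : α} (hp : a p = 1) (hab : a t * b t = 0) :
    b t * (a p * x p) - a t * (b t * x p) = b t * x p := by
  linear_combination (-x p) * hab + b t * x p * hp

theorem ite_sin_pi_mul_ite_sin_pi_eq_zero (t : ℝ) :
    ((if t ≤ 1 then Real.sin (Real.pi * t) else 0) *
      if 1 ≤ t then Real.sin (Real.pi * t) else 0) = 0 := by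
  rcases lt_trichotomy t 1 with h | rfl | h
  · simp [h.not_ge]
  · simp
  · simp [h.not_ge]

theorem stmt17 :
    let a : ℝ → ℝ := fun t => if t ≤ 1 then Real.sin (Real.pi * t) else 0
    let b : ℝ → ℝ := fun t => if 1 ≤ t then Real.sin (Real.pi * t) else 0
    let B : (ℝ → ℝ) → (ℝ → ℝ) := fun y t => b t * y (1/2)
    ((∀ x : ℝ → ℝ, ∀ t ∈ Set.Icc (0:ℝ) 2,
        B (fun s => a s * x s) t - a t * B x t = B x t) ∧
      (∀ ν : ℝ, ∀ x : ℝ → ℝ, ∀ t ∈ Set.Icc (0:ℝ) 2,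
        B (fun s => a s * x s + ν * x s) t - (a t * B x t + ν * B x t) = B x t)) := by
  intro a b B
  have ha : a (1/2) = 1 := by
    simp only [a, if_pos (by norm_num : (1:ℝ) / 2 ≤ 1), mul_one_div, Real.sin_pi_div_two]
  have hB : ∀ x t, B (fun s => a s * x s) t - a t * B x t = B x t := fun x t =>
    rankOne_mul_sub_mul_rankOne x ha (ite_sin_pi_mul_ite_sin_pi_eq_zero t)
  refine ⟨fun x t _ => hB x t, fun ν x t _ => ?_⟩
  linear_combination hB x t
end
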